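/- Let n ≥ 1 be a natural number and let s(n) = 0 if n is even and s(n) = * if n is odd. Then, as combinatorial games, (2n + 2) + { n | s(n−1) } is equivalent to { 3n + 2 | (2n + 2) + s(n−1) }. -/

import Mathlib

namespace SetTheory

universe u

/-- Combinatorial pregames (removed from Mathlib; reproduced with the old meaning). -/
inductive PGame : Type (u + 1)
  | mk : ∀ α β : Type u, (α → PGame) → (β → PGame) → PGame

namespace PGame

/-- The pair `(x ≤ y, x ⧏ y)`, defined by the old recursive characterization. -/
noncomputable def leLF (x : PGame.{u}) : PGame.{u} → Prop × Prop :=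
  PGame.rec (motive := fun _ => PGame.{u} → Prop × Prop)
    (fun _ _ _ _ IHxl IHxr y =>
      PGame.rec (motive := fun _ => Prop × Prop)
        (fun yl yr yL yR IHyl IHyr =>
          ((∀ i, (IHxl i (mk yl yr yL yR)).2) ∧ ∀ j, (IHyr j).2,
            (∃ j, (IHyl j).1) ∨ ∃ i, (IHxr i (mk yl yr yL yR)).1)) y) x

noncomputable instance : LE PGame.{u} := ⟨fun x y => (leLF x y).1⟩

instance : HasEquiv PGame.{u} := ⟨fun x y => x ≤ y ∧ y ≤ x⟩

instance : Zero PGame.{u} := ⟨mk PEmpty PEmpty PEmpty.elim PEmpty.elim⟩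

instance : One PGame.{u} := ⟨mk PUnit PEmpty (fun _ => 0) PEmpty.elim⟩

/-- Negation: swap the roles of the players. -/
def neg : PGame.{u} → PGame.{u}
  | mk xl xr xL xR => mk xr xl (fun j => neg (xR j)) (fun i => neg (xL i))

instance : Neg PGame.{u} := ⟨neg⟩

noncomputable instance : Add PGame.{u} :=
  ⟨fun x => PGame.rec (motive := fun _ => PGame.{u} → PGame.{u})
    (fun xl xr _ _ IHxl IHxr y =>
      PGame.rec (motive := fun _ => PGame.{u})
        (fun yl yr yL yR IHyl IHyr =>
          mk (xl ⊕ yl) (xr ⊕ yr)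
            (Sum.rec (fun i => IHxl i (mk yl yr yL yR)) IHyl)
            (Sum.rec (fun i => IHxr i (mk yl yr yL yR)) IHyr)) y) x⟩

noncomputable instance : NatCast PGame.{u} := ⟨Nat.unaryCast⟩

/-- The game `* = {0 | 0}`. -/
def star : PGame.{u} := mk PUnit PUnit (fun _ => 0) (fun _ => 0)

end PGame

end SetTheory

open SetTheory

namespace SnortFormal

/-- The state of a vertex in a Snort position: untinted (`free`), tinted Blue,
tinted Red, or removed from play (`dead`). -/
inductive Cell : Type
  | free | blue | red | dead
deriving DecidableEq

/-- The effect on a neighbouring cell of Left playing next to it: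
it becomes tinted Blue, and if it was tinted Red it is removed. -/
def tintB : Cell → Cell
  | .free => .blue
  | .blue => .blue
  | .red  => .dead
  | .dead => .dead

/-- The effect on a neighbouring cell of Right playing next to it. -/
def tintR : Cell → Cell
  | .free => .red
  | .blue => .dead
  | .red  => .red
  | .dead => .dead

/-- The position resulting from Left playing on vertex `v`: `v` is removed and
all of its neighbours are tinted Blue (doubly-tinted vertices are removed). -/
def moveL {V : Type} [DecidableEq V] (G : SimpleGraph V) [DecidableRel G.Adj]
    (c : V → Cell) (v : V) : V → Cell :=
  fun w => if w = v then .dead else if G.Adj v w then tintB (c w) else c w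

/-- The position resulting from Right playing on vertex `v`. -/
def moveR {V : Type} [DecidableEq V] (G : SimpleGraph V) [DecidableRel G.Adj]
    (c : V → Cell) (v : V) : V → Cell :=
  fun w => if w = v then .dead else if G.Adj v w then tintR (c w) else c w

/-- The vertices still present in the position. -/
def aliveSet {V : Type} [Fintype V] (c : V → Cell) : Finset V :=
  Finset.univ.filter (fun v => c v ≠ Cell.dead)

theorem alive_move_lt {V : Type} [Fintype V] [DecidableEq V]
    (G : SimpleGraph V) [DecidableRel G.Adj] (c : V → Cell) (v : V)
    (hv : c v ≠ Cell.dead) (f : Cell → Cell) (hf : f Cell.dead = Cell.dead) :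
    (aliveSet (fun w => if w = v then Cell.dead else if G.Adj v w then f (c w) else c w)).card
      < (aliveSet c).card := by
  apply Finset.card_lt_card
  constructor
  · intro w hw
    simp only [aliveSet, Finset.mem_filter, Finset.mem_univ, true_and] at hw ⊢
    by_cases h : w = v
    · simp [h] at hw
    · simp only [h, if_false] at hw
      by_cases hadj : G.Adj v w
      · simp only [hadj, if_true] at hw
        intro hd
        rw [hd, hf] at hw
        exact hw rfl
      · simpa [hadj] using hw
  · intro hsub
    have hv' : v ∈ aliveSet c := by
      simp [aliveSet, hv]
    have := hsub hv'
    simp [aliveSet] at this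

/-- The combinatorial pregame given by playing Snort on the graph `G` with
tinting `c`. Left may play on any vertex that is free or tinted Blue; Right
may play on any vertex that is free or tinted Red. -/
def snort {V : Type} [Fintype V] [DecidableEq V] (G : SimpleGraph V) [DecidableRel G.Adj]
    (c : V → Cell) : PGame :=
  PGame.mk {v : V // c v = Cell.free ∨ c v = Cell.blue}
    {v : V // c v = Cell.free ∨ c v = Cell.red}
    (fun v => snort G (moveL G c v.1))
    (fun v => snort G (moveR G c v.1))
termination_by (aliveSet c).card
decreasing_by
  · exact alive_move_lt G c v.1 (by rcases v.2 with h | h <;> simp [h]) tintB rfl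
  · exact alive_move_lt G c v.1 (by rcases v.2 with h | h <;> simp [h]) tintR rfl

/-- Build a simple graph from a (not necessarily symmetric) Boolean adjacency
function by symmetrizing and removing loops. -/
def graphOfBool {W : Type} (f : W → W → Bool) : SimpleGraph W where
  Adj u v := u ≠ v ∧ (f u v ∨ f v u)
  symm := ⟨fun _ _ ⟨h1, h2⟩ => ⟨h1.symm, h2.symm⟩⟩
  loopless := ⟨fun _ h => h.1 rfl⟩

instance {W : Type} [DecidableEq W] (f : W → W → Bool) :
    DecidableRel (graphOfBool f).Adj :=
  fun u v => inferInstanceAs (Decidable (u ≠ v ∧ (f u v ∨ f v u)))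

/-- The game `{A | B}` with unique Left option `A` and unique Right option `B`. -/
def ofPair (A B : PGame) : PGame :=
  PGame.mk PUnit PUnit (fun _ => A) (fun _ => B)

/-- The game `±{A, B} = {A, B | −A, −B}`. -/
def pmPair (A B : PGame) : PGame :=
  PGame.mk Bool Bool (fun x => if x then A else B) (fun x => if x then -A else -B)


/-- `s(n)`: the game `0` if `n` is even and `* = {0 | 0}` if `n` is odd. -/
def sgame (n : ℕ) : PGame := if Even n then 0 else PGame.star

/-- The star `K_{1,n}`: centre `none`, leaves `some i`. -/
abbrev starGraph (n : ℕ) : SimpleGraph (Option (Fin n)) :=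
  graphOfBool (fun u v =>
    match u, v with
    | none, some _ => true
    | _, _ => false)

section GameAux

universe w

/-- Strict "less or fuzzy" relation, the second component of `leLF`. -/
def Lf (x y : PGame.{w}) : Prop := (SetTheory.PGame.leLF x y).2

/-- Left moves type. -/
def LMoves : PGame.{w} → Type w
  | PGame.mk l _ _ _ => l

/-- Left move. -/
def LMove : (x : PGame.{w}) → LMoves x → PGame.{w}
  | PGame.mk _ _ L _ => L

theorem gle_mk {xl xr yl yr : Type w} {xL : xl → PGame.{w}} {xR : xr → PGame.{w}}
    {yL : yl → PGame.{w}} {yR : yr → PGame.{w}} :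
    PGame.mk xl xr xL xR ≤ PGame.mk yl yr yL yR ↔
      (∀ i, Lf (xL i) (PGame.mk yl yr yL yR)) ∧ ∀ j, Lf (PGame.mk xl xr xL xR) (yR j) :=
  Iff.rfl

theorem lf_mk {xl xr yl yr : Type w} {xL : xl → PGame.{w}} {xR : xr → PGame.{w}}
    {yL : yl → PGame.{w}} {yR : yr → PGame.{w}} :
    Lf (PGame.mk xl xr xL xR) (PGame.mk yl yr yL yR) ↔
      (∃ j, PGame.mk xl xr xL xR ≤ yL j) ∨ ∃ i, xR i ≤ PGame.mk yl yr yL yR :=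
  Iff.rfl

theorem gequiv_iff {x y : PGame.{w}} : x ≈ y ↔ x ≤ y ∧ y ≤ x := Iff.rfl

theorem lf_of_le_L {x : PGame.{w}} {yl yr : Type w} {yL : yl → PGame.{w}} {yR : yr → PGame.{w}}
    (j : yl) (h : x ≤ yL j) : Lf x (PGame.mk yl yr yL yR) := by
  cases x
  exact lf_mk.2 (Or.inl ⟨j, h⟩)

theorem lf_of_R_le {xl xr : Type w} {xL : xl → PGame.{w}} {xR : xr → PGame.{w}} {y : PGame.{w}}
    (i : xr) (h : xR i ≤ y) : Lf (PGame.mk xl xr xL xR) y := by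
  cases y
  exact lf_mk.2 (Or.inr ⟨i, h⟩)

theorem gle_refl (x : PGame.{w}) : x ≤ x := by
  induction x with
  | mk xl xr xL xR IHl IHr =>
    exact gle_mk.2 ⟨fun i => lf_of_le_L i (IHl i), fun j => lf_of_R_le j (IHr j)⟩

theorem trans_aux (x y z : PGame.{w}) :
    (x ≤ y → y ≤ z → x ≤ z) ∧ (x ≤ y → Lf y z → Lf x z) ∧ (Lf x y → y ≤ z → Lf x z) := by
  induction x generalizing y z with
  | mk xl xr xL xR IHxl IHxr =>
    induction y generalizing z with
    | mk yl yr yL yR IHyl IHyr =>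
      induction z with
      | mk zl zr zL zR IHzl IHzr =>
        refine ⟨fun h1 h2 => ?_, fun h1 h2 => ?_, fun h1 h2 => ?_⟩
        · exact gle_mk.2 ⟨fun i => (IHxl i _ _).2.2 ((gle_mk.1 h1).1 i) h2,
            fun j => (IHzr j).2.1 h1 ((gle_mk.1 h2).2 j)⟩
        · rcases lf_mk.1 h2 with ⟨j, hj⟩ | ⟨i, hi⟩
          · exact lf_of_le_L j ((IHzl j).1 h1 hj)
          · exact (IHyr i _).2.2 ((gle_mk.1 h1).2 i) hi
        · rcases lf_mk.1 h1 with ⟨j, hj⟩ | ⟨i, hi⟩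
          · exact (IHyl j _).2.1 hj ((gle_mk.1 h2).1 j)
          · exact lf_of_R_le i ((IHxr i _ _).1 hi h2)

theorem gle_trans {x y z : PGame.{w}} (h1 : x ≤ y) (h2 : y ≤ z) : x ≤ z :=
  (trans_aux x y z).1 h1 h2

theorem gle_lf_trans {x y z : PGame.{w}} (h1 : x ≤ y) (h2 : Lf y z) : Lf x z :=
  (trans_aux x y z).2.1 h1 h2

theorem gequiv_refl (x : PGame.{w}) : x ≈ x := gequiv_iff.2 ⟨gle_refl x, gle_refl x⟩

theorem gequiv_symm {x y : PGame.{w}} (h : x ≈ y) : y ≈ x :=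
  gequiv_iff.2 ⟨(gequiv_iff.1 h).2, (gequiv_iff.1 h).1⟩

theorem gequiv_trans {x y z : PGame.{w}} (h1 : x ≈ y) (h2 : y ≈ z) : x ≈ z :=
  gequiv_iff.2 ⟨gle_trans (gequiv_iff.1 h1).1 (gequiv_iff.1 h2).1,
    gle_trans (gequiv_iff.1 h2).2 (gequiv_iff.1 h1).2⟩

theorem add_mk' {xl xr yl yr : Type w} (xL : xl → PGame.{w}) (xR : xr → PGame.{w})
    (yL : yl → PGame.{w}) (yR : yr → PGame.{w}) :
    PGame.mk xl xr xL xR + PGame.mk yl yr yL yR =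
      PGame.mk (xl ⊕ yl) (xr ⊕ yr)
        (Sum.elim (fun i => xL i + PGame.mk yl yr yL yR) (fun j => PGame.mk xl xr xL xR + yL j))
        (Sum.elim (fun i => xR i + PGame.mk yl yr yL yR) (fun j => PGame.mk xl xr xL xR + yR j)) :=
  rfl

theorem zero_def : (0 : PGame.{w}) = PGame.mk PEmpty PEmpty PEmpty.elim PEmpty.elim := rfl

theorem one_def : (1 : PGame.{w}) = PGame.mk PUnit PEmpty (fun _ => 0) PEmpty.elim := rfl

theorem natCast_succ' (k : ℕ) : ((k + 1 : ℕ) : PGame.{w}) = (k : PGame.{w}) + 1 := rfl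

theorem natCast_zero' : ((0 : ℕ) : PGame.{w}) = 0 := rfl

theorem add_mono_left_aux (x y z : PGame.{w}) :
    (y ≤ z → x + y ≤ x + z) ∧ (Lf y z → Lf (x + y) (x + z)) := by
  induction x generalizing y z with
  | mk xl xr xL xR IHxl IHxr =>
    induction y generalizing z with
    | mk yl yr yL yR IHyl IHyr =>
      induction z with
      | mk zl zr zL zR IHzl IHzr =>
        refine ⟨fun h => ?_, fun h => ?_⟩
        · rw [add_mk', add_mk']
          refine gle_mk.2 ⟨?_, ?_⟩
          · rintro (i|j)
            · exact lf_of_le_L (Sum.inl i) ((IHxl i _ _).1 h)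
            · exact (IHyl j _).2 ((gle_mk.1 h).1 j)
          · rintro (i|j)
            · exact lf_of_R_le (Sum.inl i) ((IHxr i _ _).1 h)
            · exact (IHzr j).2 ((gle_mk.1 h).2 j)
        · rcases lf_mk.1 h with ⟨j, hj⟩ | ⟨i, hi⟩
          · rw [add_mk', add_mk']
            exact lf_of_le_L (Sum.inr j) ((IHzl j).1 hj)
          · rw [add_mk', add_mk']
            exact lf_of_R_le (Sum.inr i) ((IHyr i _).1 hi)

theorem add_mono_right_aux (x y z : PGame.{w}) :
    (y ≤ z → y + x ≤ z + x) ∧ (Lf y z → Lf (y + x) (z + x)) := by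
  induction x generalizing y z with
  | mk xl xr xL xR IHxl IHxr =>
    induction y generalizing z with
    | mk yl yr yL yR IHyl IHyr =>
      induction z with
      | mk zl zr zL zR IHzl IHzr =>
        refine ⟨fun h => ?_, fun h => ?_⟩
        · rw [add_mk', add_mk']
          refine gle_mk.2 ⟨?_, ?_⟩
          · rintro (j|i)
            · exact (IHyl j _).2 ((gle_mk.1 h).1 j)
            · exact lf_of_le_L (Sum.inr i) ((IHxl i _ _).1 h)
          · rintro (k|i)
            · exact (IHzr k).2 ((gle_mk.1 h).2 k)
            · exact lf_of_R_le (Sum.inr i) ((IHxr i _ _).1 h)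
        · rcases lf_mk.1 h with ⟨j, hj⟩ | ⟨i, hi⟩
          · rw [add_mk', add_mk']
            exact lf_of_le_L (Sum.inl j) ((IHzl j).1 hj)
          · rw [add_mk', add_mk']
            exact lf_of_R_le (Sum.inl i) ((IHyr i _).1 hi)

theorem add_le_add' {a b c d : PGame.{w}} (h1 : a ≤ b) (h2 : c ≤ d) : a + c ≤ b + d :=
  gle_trans ((add_mono_right_aux c a b).1 h1) ((add_mono_left_aux b c d).1 h2)

theorem add_congr_right' {x y : PGame.{w}} (z : PGame.{w}) (h : x ≈ y) : x + z ≈ y + z :=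
  gequiv_iff.2 ⟨(add_mono_right_aux z x y).1 (gequiv_iff.1 h).1,
    (add_mono_right_aux z y x).1 (gequiv_iff.1 h).2⟩

theorem add_zero_equiv' (x : PGame.{w}) : x + 0 ≈ x := by
  induction x with
  | mk xl xr xL xR IHl IHr =>
    rw [zero_def, add_mk', gequiv_iff]
    constructor
    · refine gle_mk.2 ⟨?_, ?_⟩
      · rintro (i|i)
        · exact lf_of_le_L i (gequiv_iff.1 (IHl i)).1
        · exact i.elim
      · intro j
        exact lf_of_R_le (Sum.inl j) (gequiv_iff.1 (IHr j)).1
    · refine gle_mk.2 ⟨?_, ?_⟩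
      · intro i
        exact lf_of_le_L (Sum.inl i) (gequiv_iff.1 (IHl i)).2
      · rintro (j|j)
        · exact lf_of_R_le j (gequiv_iff.1 (IHr j)).2
        · exact j.elim

theorem add_assoc_equiv' (x y z : PGame.{w}) : (x + y) + z ≈ x + (y + z) := by
  induction x generalizing y z with
  | mk xl xr xL xR IHxl IHxr =>
    induction y generalizing z with
    | mk yl yr yL yR IHyl IHyr =>
      induction z with
      | mk zl zr zL zR IHzl IHzr =>
        simp only [add_mk']
        rw [gequiv_iff]
        constructor
        · refine gle_mk.2 ⟨?_, ?_⟩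
          · rintro ((i|j)|k)
            · exact lf_of_le_L (Sum.inl i) (gequiv_iff.1 (IHxl i _ _)).1
            · exact lf_of_le_L (Sum.inr (Sum.inl j)) (gequiv_iff.1 (IHyl j _)).1
            · exact lf_of_le_L (Sum.inr (Sum.inr k)) (gequiv_iff.1 (IHzl k)).1
          · rintro (i|(j|k))
            · exact lf_of_R_le (Sum.inl (Sum.inl i)) (gequiv_iff.1 (IHxr i _ _)).1
            · exact lf_of_R_le (Sum.inl (Sum.inr j)) (gequiv_iff.1 (IHyr j _)).1
            · exact lf_of_R_le (Sum.inr k) (gequiv_iff.1 (IHzr k)).1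
        · refine gle_mk.2 ⟨?_, ?_⟩
          · rintro (i|(j|k))
            · exact lf_of_le_L (Sum.inl (Sum.inl i)) (gequiv_iff.1 (IHxl i (PGame.mk yl yr yL yR) (PGame.mk zl zr zL zR))).2
            · exact lf_of_le_L (Sum.inl (Sum.inr j)) (gequiv_iff.1 (IHyl j _)).2
            · exact lf_of_le_L (Sum.inr k) (gequiv_iff.1 (IHzl k)).2
          · rintro ((i|j)|k)
            · exact lf_of_R_le (Sum.inl i) (gequiv_iff.1 (IHxr i (PGame.mk yl yr yL yR) (PGame.mk zl zr zL zR))).2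
            · exact lf_of_R_le (Sum.inr (Sum.inl j)) (gequiv_iff.1 (IHyr j _)).2
            · exact lf_of_R_le (Sum.inr (Sum.inr k)) (gequiv_iff.1 (IHzr k)).2

theorem natCast_add_equiv (a b : ℕ) : ((a + b : ℕ) : PGame.{w}) ≈ (a : PGame.{w}) + (b : PGame.{w}) := by
  induction b with
  | zero =>
    rw [Nat.add_zero, natCast_zero']
    exact gequiv_symm (add_zero_equiv' _)
  | succ b ih =>
    rw [← Nat.add_assoc, natCast_succ', natCast_succ']
    exact gequiv_trans (add_congr_right' 1 ih) (add_assoc_equiv' _ _ _)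

/-- Hereditarily: no right moves, and every left option is at most the game. -/
inductive NumG : PGame.{w} → Prop
  | intro {l r : Type w} {L : l → PGame.{w}} {R : r → PGame.{w}} :
      IsEmpty r → (∀ i, L i ≤ PGame.mk l r L R) → (∀ i, NumG (L i)) → NumG (PGame.mk l r L R)

theorem num_add {x y : PGame.{w}} (hx : NumG x) (hy : NumG y) : NumG (x + y) := by
  induction hx generalizing y with
  | @intro xl xr xL xR hxe hxL hxN IHx =>
    induction hy with
    | @intro yl yr yL yR hye hyL hyN IHy =>
      rw [add_mk']
      refine NumG.intro ?_ ?_ ?_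
      · haveI := hxe; haveI := hye; infer_instance
      · rintro (i|j)
        · exact (add_mono_right_aux _ _ _).1 (hxL i)
        · exact (add_mono_left_aux _ _ _).1 (hyL j)
      · rintro (i|j)
        · exact IHx i (NumG.intro hye hyL hyN)
        · exact IHy j

theorem num_zero : NumG (0 : PGame.{w}) := by
  rw [zero_def]
  exact NumG.intro inferInstance (fun i => i.elim) (fun i => i.elim)

theorem num_one : NumG (1 : PGame.{w}) := by
  rw [one_def]
  refine NumG.intro inferInstance (fun _ => ?_) (fun _ => num_zero)
  rw [zero_def]
  exact gle_mk.2 ⟨fun i => i.elim, fun j => j.elim⟩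

theorem num_natCast : ∀ k : ℕ, NumG ((k : ℕ) : PGame.{w})
  | 0 => num_zero
  | k + 1 => by
    rw [natCast_succ']
    exact num_add (num_natCast k) num_one

theorem num_zero_le (x : PGame.{w}) (hx : NumG x) : 0 ≤ x := by
  cases hx with
  | @intro l r L R he hL hN =>
    rw [zero_def]
    exact gle_mk.2 ⟨fun i => i.elim, fun j => (haveI := he; isEmptyElim j)⟩

theorem star_le_succ (x : PGame.{w}) (hx : NumG x) : PGame.star ≤ x + 1 := by
  have h0 : (0 : PGame.{w}) ≤ x + 0 := num_zero_le _ (num_add hx num_zero)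
  cases hx with
  | @intro l r L R he hL hN =>
    rw [one_def, add_mk']
    unfold PGame.star
    refine gle_mk.2 ⟨fun _ => lf_of_le_L (Sum.inr PUnit.unit) h0, ?_⟩
    rintro (j|j)
    · haveI := he; exact isEmptyElim j
    · exact j.elim

theorem helperL (Y X A B : PGame.{w}) (hY : NumG Y) (hYX : Y ≤ X) (hYX' : Lf Y X)
    (hBA : B ≤ A) (hBL : ∀ k, LMove B k ≤ A) : Y + B ≤ ofPair (X + A) (X + B) := by
  have hR : Lf (Y + B) (X + B) := (add_mono_right_aux B Y X).2 hYX'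
  cases hY with
  | @intro yl yr yL yR hye hyL hyN =>
    cases B with
    | mk bl br bL bR =>
      rw [add_mk']
      unfold ofPair
      refine gle_mk.2 ⟨?_, ?_⟩
      · rintro (k|k)
        · exact lf_of_le_L PUnit.unit (add_le_add' (gle_trans (hyL k) hYX) hBA)
        · exact lf_of_le_L PUnit.unit (add_le_add' hYX (hBL k))
      · intro j
        exact hR

theorem translate (x A B : PGame.{w}) (hx : NumG x) (hBA : B ≤ A)
    (hBL : ∀ k, LMove B k ≤ A) : x + ofPair A B ≈ ofPair (x + A) (x + B) := by
  induction hx with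
  | @intro xl xr xL xR hxe hxL hxN IH =>
    have key : ∀ i, Lf (xL i + ofPair A B) (ofPair (PGame.mk xl xr xL xR + A)
        (PGame.mk xl xr xL xR + B)) := by
      intro i
      have h3 := (gequiv_iff.1 (IH i)).1
      have h4 : Lf (ofPair (xL i + A) (xL i + B))
          (ofPair (PGame.mk xl xr xL xR + A) (PGame.mk xl xr xL xR + B)) :=
        lf_of_R_le (xL := fun _ : PUnit => xL i + A) (xR := fun _ : PUnit => xL i + B)
          PUnit.unit (helperL _ _ _ _ (hxN i) (hxL i) (lf_of_le_L i (gle_refl _)) hBA hBL)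
      exact gle_lf_trans h3 h4
    unfold ofPair at key ⊢
    rw [add_mk', gequiv_iff]
    constructor
    · refine gle_mk.2 ⟨?_, ?_⟩
      · rintro (i|i)
        · exact key i
        · exact lf_of_le_L PUnit.unit (gle_refl _)
      · intro j
        exact lf_of_R_le (Sum.inr PUnit.unit) (gle_refl _)
    · refine gle_mk.2 ⟨?_, ?_⟩
      · intro i
        exact lf_of_le_L (Sum.inr PUnit.unit) (gle_refl _)
      · rintro (j|j)
        · haveI := hxe; exact isEmptyElim j
        · exact lf_of_R_le PUnit.unit (gle_refl _)

theorem ofPair_congr {A₁ A₂ B₁ B₂ : PGame.{w}} (hA : A₁ ≈ A₂) (hB : B₁ ≈ B₂) :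
    ofPair A₁ B₁ ≈ ofPair A₂ B₂ := by
  rw [gequiv_iff] at hA hB ⊢
  unfold ofPair
  exact ⟨gle_mk.2 ⟨fun _ => lf_of_le_L PUnit.unit hA.1, fun _ => lf_of_R_le PUnit.unit hB.1⟩,
    gle_mk.2 ⟨fun _ => lf_of_le_L PUnit.unit hA.2, fun _ => lf_of_R_le PUnit.unit hB.2⟩⟩

end GameAux

theorem sgame_eq (m : ℕ) : sgame m = 0 ∨ sgame m = PGame.star := by
  unfold sgame; split_ifs <;> simp

/-- `(2n+2) + {n | s(n-1)} ≈ {3n+2 | (2n+2) + s(n-1)}`. -/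
theorem sum_number_tinted_star (n : ℕ) (hn : 1 ≤ n) :
    ((2*n+2 : ℕ) : PGame) + ofPair (n : PGame) (sgame (n-1))
      ≈ ofPair ((3*n+2 : ℕ) : PGame) (((2*n+2 : ℕ) : PGame) + sgame (n-1)) := by
  have hB : sgame (n-1) ≤ ((n : ℕ) : PGame) := by
    obtain ⟨m, rfl⟩ : ∃ m, n = m + 1 := ⟨n - 1, by omega⟩
    rcases sgame_eq (m+1-1) with h | h <;> rw [h]
    · exact num_zero_le _ (num_natCast _)
    · rw [natCast_succ']
      exact star_le_succ _ (num_natCast m)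
  have hBL : ∀ i, LMove (sgame (n-1)) i ≤ ((n : ℕ) : PGame) := by
    rcases sgame_eq (n-1) with h | h <;> rw [h]
    · intro i; exact PEmpty.elim i
    · intro i
      exact num_zero_le _ (num_natCast n)
  have h1 := translate ((2*n+2 : ℕ) : PGame) ((n : ℕ) : PGame) (sgame (n-1)) (num_natCast _) hB hBL
  have h2 : ((2*n+2 : ℕ) : PGame) + ((n : ℕ) : PGame) ≈ ((3*n+2 : ℕ) : PGame) := by
    rw [show 3*n+2 = (2*n+2)+n from by ring]
    exact gequiv_symm (natCast_add_equiv _ _)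
  exact gequiv_trans h1 (ofPair_congr h2 (gequiv_refl _))
end SnortFormal
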